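/- For every complex number s with Re(s) > 1, the series ∑_{n=1}^{∞} d(n)²/nˢ converges and equals ζ(s)⁴/ζ(2s). -/

import Mathlib

/-!
With `1□` the indicator of the nonzero squares, `1□ * d² = d * d` as arithmetic functions. All
three functions are multiplicative, so it suffices to check this at a prime power `p ^ k`, where
it reads `∑_{i + j = k, i even} (j + 1)² = ∑_{i + j = k} (i + 1) (j + 1)`; both sides grow by
`(k + 3)²` when `k` grows by `2`. Taking L-series gives `ζ(2s) · ∑ d(n)²/nˢ = ζ(s)⁴`, and the
series `∑ d(n)²/nˢ` converges because the same identity gives `d(n)² ≤ (d * d)(n)`.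
-/

open Finset
open scoped LSeries.notation ArithmeticFunction.zeta ArithmeticFunction.sigma

theorem Nat.Coprime.isSquare_mul_iff {m n : ℕ} (h : m.Coprime n) :
    IsSquare (m * n) ↔ IsSquare m ∧ IsSquare n := by
  refine ⟨fun ⟨c, hc⟩ => ?_, fun ⟨hm, hn⟩ => hm.mul hn⟩
  obtain ⟨a, ha⟩ := exists_eq_pow_of_mul_eq_pow (Nat.isUnit_iff.mpr h) (hc.trans (sq c).symm)
  obtain ⟨b, hb⟩ := exists_eq_pow_of_mul_eq_pow (Nat.isUnit_iff.mpr h.symm)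
    ((mul_comm n m).trans hc |>.trans (sq c).symm)
  exact ⟨⟨a, ha.trans (sq a)⟩, ⟨b, hb.trans (sq b)⟩⟩

theorem Nat.Prime.isSquare_pow_iff {p i : ℕ} (hp : p.Prime) : IsSquare (p ^ i) ↔ Even i := by
  refine ⟨fun ⟨c, hc⟩ => ?_, fun h => h.isSquare_pow p⟩
  have := congrArg (fun n => n.factorization p) hc
  simp only [hp.factorization_pow, Finsupp.single_eq_same, ← sq, Nat.factorization_pow,
    Finsupp.smul_apply, smul_eq_mul] at this
  exact ⟨c.factorization p, by omega⟩

theorem Finset.Nat.sum_antidiagonal_ite_even_sq (k : ℕ) :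
    ∑ ij ∈ antidiagonal k, (if Even ij.1 then (ij.2 + 1) ^ 2 else 0) =
      ∑ ij ∈ antidiagonal k, (ij.1 + 1) * (ij.2 + 1) := by
  induction k using Nat.twoStepInduction with
  | zero => decide
  | one => decide
  | more k ih _ =>
    have lhs : ∑ ij ∈ antidiagonal (k + 2), (if Even ij.1 then (ij.2 + 1) ^ 2 else 0) =
        (k + 3) ^ 2 + ∑ ij ∈ antidiagonal k, (if Even ij.1 then (ij.2 + 1) ^ 2 else 0) := by
      simp [sum_antidiagonal_succ, parity_simps]
    have rhs : ∑ ij ∈ antidiagonal (k + 2), (ij.1 + 1) * (ij.2 + 1) =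
        (k + 3) ^ 2 + ∑ ij ∈ antidiagonal k, (ij.1 + 1) * (ij.2 + 1) := by
      have inner : ∑ ij ∈ antidiagonal k, (ij.1 + 2) * (ij.2 + 2) =
          ∑ ij ∈ antidiagonal k, ((ij.1 + 1) * (ij.2 + 1) + (k + 3)) :=
        sum_congr rfl fun ij hij => by rw [← mem_antidiagonal.mp hij]; ring
      rw [sum_antidiagonal_succ, sum_antidiagonal_succ']
      simp only [inner, sum_add_distrib, sum_const, card_antidiagonal, smul_eq_mul]
      ring
    rw [lhs, rhs, ih]

theorem LSeriesHasSum.hasSum_succ_div_cpow {f : ℕ → ℂ} {s a : ℂ} (h : LSeriesHasSum f s a) :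
    HasSum (fun n : ℕ => f (n + 1) / ((n : ℂ) + 1) ^ s) a := by
  simpa [LSeries.term_of_ne_zero] using (hasSum_nat_add_iff' 1).mpr h

namespace ArithmeticFunction

theorem mul_apply_prime_pow {R : Type*} [Semiring R] (f g : ArithmeticFunction R) {p : ℕ}
    (hp : p.Prime) (k : ℕ) :
    (f * g) (p ^ k) = ∑ ij ∈ antidiagonal k, f (p ^ ij.1) * g (p ^ ij.2) := by
  rw [mul_apply, Nat.sum_divisorsAntidiagonal (f := fun a b => f a * g b),
    Nat.sum_divisors_prime_pow hp,
    Finset.Nat.sum_antidiagonal_eq_sum_range_succ (fun i j => f (p ^ i) * g (p ^ j))]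
  refine sum_congr rfl fun i hi => ?_
  rw [Nat.pow_div (by simpa [Nat.lt_succ_iff] using hi) hp.pos]

theorem apply_le_mul_apply {f g : ArithmeticFunction ℕ} (hf : f 1 = 1) (n : ℕ) :
    g n ≤ (f * g) n := by
  rcases eq_or_ne n 0 with rfl | hn
  · simp
  rw [mul_apply]
  calc g n = f 1 * g n := by rw [hf, one_mul]
    _ ≤ ∑ x ∈ n.divisorsAntidiagonal, f x.1 * g x.2 :=
      single_le_sum (f := fun x : ℕ × ℕ => f x.1 * g x.2) (a := (1, n))
        (fun _ _ => Nat.zero_le _) (Nat.mem_divisorsAntidiagonal.mpr ⟨one_mul n, hn⟩)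

theorem LSeriesHasSum_natCoe_mul {f g : ArithmeticFunction ℕ} {s a b : ℂ}
    (hf : LSeriesHasSum ↗f s a) (hg : LSeriesHasSum ↗g s b) :
    LSeriesHasSum ↗(f * g) s (a * b) := by
  simpa [natCoe_mul] using LSeriesHasSum_mul (f := (f : ArithmeticFunction ℂ)) (g := g)
    (by simpa using hf) (by simpa using hg)

theorem LSeriesSummable_of_le {f g : ArithmeticFunction ℕ} {s : ℂ} (h : ∀ n, f n ≤ g n)
    (hg : LSeriesSummable ↗g s) : LSeriesSummable ↗f s :=
  hg.norm.of_norm_bounded fun n => LSeries.norm_term_le s (by simpa using h n)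

def squareIndicator : ArithmeticFunction ℕ :=
  ⟨fun n => if n ≠ 0 ∧ IsSquare n then 1 else 0, by simp⟩

theorem squareIndicator_apply {n : ℕ} :
    squareIndicator n = if n ≠ 0 ∧ IsSquare n then 1 else 0 := rfl

theorem isMultiplicative_squareIndicator : squareIndicator.IsMultiplicative := by
  refine ⟨by simp [squareIndicator_apply], fun {m n} hmn => ?_⟩
  simp only [squareIndicator_apply, hmn.isSquare_mul_iff, mul_ne_zero_iff]
  split_ifs <;> tauto

theorem squareIndicator_apply_prime_pow {p i : ℕ} (hp : p.Prime) :
    squareIndicator (p ^ i) = if Even i then 1 else 0 := by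
  simp [squareIndicator_apply, hp.ne_zero, hp.isSquare_pow_iff]

theorem squareIndicator_mul_pmul_sigma_zero :
    squareIndicator * (σ 0).pmul (σ 0) = σ 0 * σ 0 := by
  refine (IsMultiplicative.eq_iff_eq_on_prime_powers _
    (isMultiplicative_squareIndicator.mul (isMultiplicative_sigma.pmul isMultiplicative_sigma)) _
    (isMultiplicative_sigma.mul isMultiplicative_sigma)).mpr fun p k hp => ?_
  rw [mul_apply_prime_pow _ _ hp, mul_apply_prime_pow _ _ hp]
  simp only [squareIndicator_apply_prime_pow hp, pmul_apply, sigma_zero_apply_prime_pow hp,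
    ite_mul, one_mul, zero_mul, ← sq]
  exact Finset.Nat.sum_antidiagonal_ite_even_sq k

theorem LSeriesHasSum_squareIndicator {s : ℂ} (hs : 1 < s.re) :
    LSeriesHasSum ↗squareIndicator s (riemannZeta (2 * s)) := by
  have h2s : 1 < (2 * s).re := by simp; linarith
  have hoff : ∀ n ∉ Set.range (· ^ 2), LSeries.term ↗squareIndicator s n = 0 := by
    intro n hn
    have : ¬IsSquare n := fun ⟨m, hm⟩ => hn ⟨m, hm ▸ sq m⟩
    simp [LSeries.term_def, squareIndicator_apply, this]
  have hterm : LSeries.term ↗squareIndicator s ∘ (· ^ 2) = LSeries.term 1 (2 * s) := by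
    funext m
    rcases eq_or_ne m 0 with rfl | hm
    · simp
    simp [LSeries.term_of_ne_zero, hm, squareIndicator_apply, Complex.cpow_ofNat_mul, sq,
      Complex.natCast_mul_natCast_cpow]
  rw [LSeriesHasSum, ← (Nat.pow_left_injective two_ne_zero).hasSum_iff hoff, hterm]
  exact LSeriesHasSum_one h2s

theorem LSeriesHasSum_sigma_zero_mul_sigma_zero {s : ℂ} (hs : 1 < s.re) :
    LSeriesHasSum ↗(σ 0 * σ 0) s (riemannZeta s ^ 4) := by
  have hσ : LSeriesHasSum ↗(σ 0) s (riemannZeta s * riemannZeta s) := by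
    rw [← zeta_mul_pow_eq_sigma, pow_zero_eq_zeta]
    exact LSeriesHasSum_natCoe_mul (LSeriesHasSum_zeta hs) (LSeriesHasSum_zeta hs)
  convert LSeriesHasSum_natCoe_mul hσ hσ using 1
  ring

theorem LSeriesSummable_pmul_sigma_zero {s : ℂ} (hs : 1 < s.re) :
    LSeriesSummable ↗((σ 0).pmul (σ 0)) s := by
  refine LSeriesSummable_of_le (fun n => ?_)
    (LSeriesHasSum_sigma_zero_mul_sigma_zero hs).LSeriesSummable
  rw [← squareIndicator_mul_pmul_sigma_zero]
  exact apply_le_mul_apply (by simp [squareIndicator_apply]) n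

end ArithmeticFunction

open ArithmeticFunction in
theorem dirichlet_series_divisors_sq (s : ℂ) (hs : 1 < s.re) :
    HasSum (fun n : ℕ => (((n + 1).divisors.card : ℂ)) ^ 2 / ((n : ℂ) + 1) ^ s)
      (riemannZeta s ^ 4 / riemannZeta (2 * s)) := by
  have h2s : 1 < (2 * s).re := by simp; linarith
  have hF := LSeriesSummable_pmul_sigma_zero hs
  have hprod := LSeriesHasSum_natCoe_mul (LSeriesHasSum_squareIndicator hs) hF.LSeriesHasSum
  rw [squareIndicator_mul_pmul_sigma_zero] at hprod
  have hL : LSeries ↗((σ 0).pmul (σ 0)) s = riemannZeta s ^ 4 / riemannZeta (2 * s) := by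
    rw [eq_div_iff (riemannZeta_ne_zero_of_one_lt_re h2s), mul_comm]
    exact hprod.unique (LSeriesHasSum_sigma_zero_mul_sigma_zero hs)
  convert (hL ▸ hF.LSeriesHasSum).hasSum_succ_div_cpow using 3 with n
  simp [sigma_zero_apply, sq]
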